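/- arXiv:2502.01266 — 3 statements merged into one kernel-verified Lean document; each statement's English description precedes it below -/
import Mathlib

section
/- In a skew orthomodular poset, if a ≤ b then S(a,b) = U(b), F(a,b) = L(a), and c(a,b) = {1}. -/
/-!
For `a ≤ b` we have `L(a,b) = L(a)` and `L(a,b') ⊆ L(b,b') = {0}`, so
`S(a,b) = U(a) ∩ U(L(a',b))`, which is `U(b)` by the skew law. The sharp operator is symmetric
in its arguments, and the orthocomplement, an order-reversing involution, carries `S(a',b')`
onto `F(a,b)`; as `b' ≤ a'`, this gives `F(a,b) = U(a')' = L(a)`. Finally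
`c(a,b) = S(a,b) ∩ U(L(a',b')) = U(b) ∩ U(b') = {1}`.
-/

/-- The sharp operator S(x,y) := U(L(x,y) ∪ L(x,y') ∪ L(x',y)). -/
def sharpOp {P : Type*} [PartialOrder P] (f : P → P) (x y : P) : Set P :=
  upperBounds (lowerBounds {x, y} ∪ lowerBounds {x, f y} ∪ lowerBounds {f x, y})

/-- The flat operator F(x,y) := L(U(x,y) ∪ U(x,y') ∪ U(x',y)). -/
def flatOp {P : Type*} [PartialOrder P] (f : P → P) (x y : P) : Set P :=
  lowerBounds (upperBounds {x, y} ∪ upperBounds {x, f y} ∪ upperBounds {f x, y})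

/-- The commutator c(a,b) := U(L(a,b) ∪ L(a,b') ∪ L(a',b) ∪ L(a',b')). -/
def commOp {P : Type*} [PartialOrder P] (f : P → P) (a b : P) : Set P :=
  upperBounds (lowerBounds {a, b} ∪ lowerBounds {a, f b} ∪ lowerBounds {f a, b} ∪
    lowerBounds {f a, f b})

open Set Function

section Orthocomplement

variable {P : Type*} [PartialOrder P] {f : P → P}

theorem Antitone.le_apply_comm_of_involutive (hf : Antitone f) (hinv : Involutive f)
    {x y : P} (h : x ≤ f y) : y ≤ f x :=
  hinv y ▸ hf h

theorem Antitone.apply_le_comm_of_involutive (hf : Antitone f) (hinv : Involutive f)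
    {x y : P} (h : f x ≤ y) : f y ≤ x :=
  hinv x ▸ hf h

theorem Antitone.image_upperBounds_of_involutive (hf : Antitone f) (hinv : Involutive f)
    (s : Set P) : f '' upperBounds s = lowerBounds (f '' s) := by
  ext z
  rw [mem_lowerBounds, forall_mem_image, hinv.image_eq_preimage_symm, mem_preimage,
    mem_upperBounds]
  exact forall₂_congr fun w _ =>
    ⟨hf.le_apply_comm_of_involutive hinv, hf.le_apply_comm_of_involutive hinv⟩

theorem Antitone.image_lowerBounds_of_involutive (hf : Antitone f) (hinv : Involutive f)
    (s : Set P) : f '' lowerBounds s = upperBounds (f '' s) := by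
  ext z
  rw [mem_upperBounds, forall_mem_image, hinv.image_eq_preimage_symm, mem_preimage,
    mem_lowerBounds]
  exact forall₂_congr fun w _ =>
    ⟨hf.apply_le_comm_of_involutive hinv, hf.apply_le_comm_of_involutive hinv⟩

theorem sharpOp_comm (f : P → P) (x y : P) : sharpOp f x y = sharpOp f y x := by
  rw [sharpOp, sharpOp, pair_comm x y, pair_comm x (f y), pair_comm (f x) y, union_right_comm]

theorem flatOp_eq_image_sharpOp (hf : Antitone f) (hinv : Involutive f) (x y : P) :
    flatOp f x y = f '' sharpOp f (f x) (f y) := by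
  simp only [sharpOp, flatOp, hf.image_upperBounds_of_involutive hinv, image_union,
    hf.image_lowerBounds_of_involutive hinv, image_pair, hinv x, hinv y]

theorem commOp_eq_sharpOp_inter (f : P → P) (x y : P) :
    commOp f x y = sharpOp f x y ∩ upperBounds (lowerBounds {f x, f y}) :=
  upperBounds_union

end Orthocomplement

theorem lowerBounds_pair_of_le {P : Type*} [Preorder P] {x y : P} (h : x ≤ y) :
    lowerBounds {x, y} = Iic x := by
  rw [lowerBounds_insert, lowerBounds_singleton, inter_eq_left.mpr (Iic_subset_Iic.mpr h)]

theorem sharpOp_eq_upperBounds_of_le {P : Type*} [PartialOrder P] [OrderBot P] {f : P → P}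
    {x y : P} (hxy : x ≤ y) (hbot : lowerBounds {y, f y} = {⊥})
    (hskew : upperBounds {y} = upperBounds (insert x (lowerBounds {y, f x}))) :
    sharpOp f x y = upperBounds {y} := by
  have hdisj : upperBounds (lowerBounds {x, f y}) = univ := by
    refine eq_univ_of_subset (upperBounds_mono_set ?_) (by rw [upperBounds_singleton, Ici_bot])
    rw [← hbot, lowerBounds_insert, lowerBounds_insert]
    exact inter_subset_inter_left _ (Iic_subset_Iic.mpr hxy)
  rw [hskew, sharpOp, upperBounds_union, upperBounds_union, hdisj, inter_univ,
    lowerBounds_pair_of_le hxy, upperBounds_Iic, upperBounds_insert, pair_comm]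

/-- In a skew orthomodular poset, if a ≤ b then S(a,b) = U(b),
F(a,b) = L(a), and c(a,b) = {1}. -/
theorem skew_omp_sharp_flat_comm {P : Type*} [PartialOrder P] [BoundedOrder P]
    (f : P → P)
    (hinv : ∀ x, f (f x) = x)
    (hanti : ∀ x y : P, x ≤ y → f y ≤ f x)
    (hinf : ∀ x : P, lowerBounds {x, f x} = {(⊥ : P)})
    (hsup : ∀ x : P, upperBounds {x, f x} = {(⊤ : P)})
    (hskew : ∀ x y : P, x ≤ y →
      upperBounds {y} = upperBounds (insert x (lowerBounds {y, f x})))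
    (a b : P) (hab : a ≤ b) :
    sharpOp f a b = upperBounds {b} ∧
    flatOp f a b = lowerBounds {a} ∧
    commOp f a b = {(⊤ : P)} := by
  have hf : Antitone f := fun x y => hanti x y
  have hfab : f b ≤ f a := hf hab
  have hsharp : sharpOp f a b = upperBounds {b} :=
    sharpOp_eq_upperBounds_of_le hab (hinf b) (hskew a b hab)
  refine ⟨hsharp, ?_, ?_⟩
  · rw [flatOp_eq_image_sharpOp hf hinv, sharpOp_comm,
      sharpOp_eq_upperBounds_of_le hfab (hinf (f a)) (hskew (f b) (f a) hfab),
      hf.image_upperBounds_of_involutive hinv, image_singleton, hinv]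
  · rw [commOp_eq_sharpOp_inter, hsharp, pair_comm, lowerBounds_pair_of_le hfab,
      upperBounds_Iic, inter_comm, ← upperBounds_insert, pair_comm, hsup]
end

section
/- In a strong skew orthomodular poset, for all a, b the following are equivalent: (i) a C b; (ii) b C a; (iii) c(a,b) = {1}. -/
/-- The compatibility relation: a C b iff U(a) = U(L(a,b) ∪ L(a,b')). -/
def compatRel {P : Type*} [PartialOrder P] (f : P → P) (a b : P) : Prop :=
  upperBounds {a} = upperBounds (lowerBounds {a, b} ∪ lowerBounds {a, f b})

/-!
Write `x'` for `f x` and `A(a,b) := L(a,b) ∪ L(a,b')`, so that `a C b` says `U(a) = U(A(a,b))`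
and `c(a,b) = U(A(a,b)) ∩ U(A(a',b))`. Since `a` bounds `A(a,b)`, the strong skew condition
reduces `a C b` to: every `w ≤ a` lying below `A(a,b)'` lies below `U(A(a,b))`. Such a `w` has
`w' ∈ c(a,b)`. If `c(a,b) = {1}` then `w = 0`; if `b C a` then `b ≤ w'`, so `w ∈ L(a,b')`.
Hence `b C a → a C b` and `c(a,b) = {1} → a C b`. Conversely, `a C b` gives `b C a`, hence
`b C a'` because `A(b,a) = A(b,a')`, hence `a' C b`, and then `c(a,b) = U(a) ∩ U(a') = {1}`.
-/

def IsStrongSkew {P : Type*} [PartialOrder P] (f : P → P) : Prop :=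
  ∀ (A : Set P) (y : P), y ∈ upperBounds A →
    upperBounds {y} = upperBounds (A ∪ lowerBounds (insert y (f '' A)))

section

variable {P : Type*} [PartialOrder P] {f : P → P}

theorem le_apply_of_le_apply (hi : Function.Involutive f) (ha : Antitone f) {x y : P}
    (h : x ≤ f y) : y ≤ f x := by
  simpa only [hi y] using ha h

theorem commOp_eq_inter (a b : P) :
    commOp f a b = upperBounds (lowerBounds {a, b} ∪ lowerBounds {a, f b}) ∩
      upperBounds (lowerBounds {f a, b} ∪ lowerBounds {f a, f b}) := by
  rw [commOp, Set.union_assoc, upperBounds_union]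

theorem commOp_comm (a b : P) : commOp f a b = commOp f b a := by
  rw [commOp, commOp, Set.pair_comm a b, Set.pair_comm a (f b), Set.pair_comm (f a) b,
    Set.pair_comm (f a) (f b), Set.union_right_comm (lowerBounds {b, a})]

theorem compatRel_compl_right_iff (hi : Function.Involutive f) {a b : P} :
    compatRel f a (f b) ↔ compatRel f a b := by
  rw [compatRel, compatRel, hi b, Set.union_comm]

theorem compatRel.le_of_mem_commOp {a b t : P} (h : compatRel f a b)
    (ht : t ∈ commOp f a b) : a ≤ t := by
  rw [commOp_eq_inter, ← h, upperBounds_singleton] at ht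
  exact ht.1

theorem compl_mem_commOp_of_mem_lowerBounds (hi : Function.Involutive f) (ha : Antitone f)
    {a b w : P}
    (hw : w ∈ lowerBounds (insert a (f '' (lowerBounds {a, b} ∪ lowerBounds {a, f b})))) :
    f w ∈ commOp f a b := by
  have hwa : w ≤ a := hw (Set.mem_insert a _)
  have hwA : ∀ u ∈ lowerBounds {a, b} ∪ lowerBounds {a, f b}, u ≤ f w := fun u hu =>
    le_apply_of_le_apply hi ha (hw (Set.mem_insert_of_mem a (Set.mem_image_of_mem f hu)))
  rintro u (((hu | hu) | hu) | hu)
  · exact hwA u (Or.inl hu)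
  · exact hwA u (Or.inr hu)
  · exact (hu (Set.mem_insert _ _)).trans (ha hwa)
  · exact (hu (Set.mem_insert _ _)).trans (ha hwa)

theorem IsStrongSkew.compatRel_of_forall (hs : IsStrongSkew f) (hi : Function.Involutive f)
    (ha : Antitone f) {a b : P}
    (h : ∀ w ≤ a, f w ∈ commOp f a b →
      ∀ t ∈ upperBounds (lowerBounds {a, b} ∪ lowerBounds {a, f b}), w ≤ t) :
    compatRel f a b := by
  have haA : a ∈ upperBounds (lowerBounds {a, b} ∪ lowerBounds {a, f b}) := by
    rintro u (hu | hu) <;> exact hu (Set.mem_insert a _)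
  rw [compatRel, hs _ a haA, upperBounds_union, Set.inter_eq_left]
  intro t ht w hw
  exact h w (hw (Set.mem_insert a _)) (compl_mem_commOp_of_mem_lowerBounds hi ha hw) t ht

theorem compatRel.symm (hs : IsStrongSkew f) (hi : Function.Involutive f) (ha : Antitone f)
    {a b : P} (h : compatRel f a b) : compatRel f b a := by
  refine hs.compatRel_of_forall hi ha fun w hwb hw t ht => ht (Or.inr ?_)
  have hwa : w ≤ f a := le_apply_of_le_apply hi ha (h.le_of_mem_commOp (commOp_comm b a ▸ hw))
  rintro x (rfl | rfl)
  exacts [hwb, hwa]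

variable [BoundedOrder P]

theorem IsStrongSkew.compatRel_of_commOp_eq_top (hs : IsStrongSkew f)
    (hi : Function.Involutive f) (ha : Antitone f) {a b : P}
    (hc : commOp f a b = {⊤}) : compatRel f a b := by
  refine hs.compatRel_of_forall hi ha fun w _ hw t _ => ?_
  rw [hc, Set.mem_singleton_iff] at hw
  calc w = f ⊤ := by rw [← hw, hi w]
    _ ≤ f (f t) := ha le_top
    _ = t := hi t

theorem compatRel.commOp_eq_top (hs : IsStrongSkew f) (hi : Function.Involutive f)
    (ha : Antitone f) (hsup : ∀ x : P, upperBounds {x, f x} = {⊤}) {a b : P}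
    (h : compatRel f a b) : commOp f a b = {⊤} := by
  have h' : compatRel f (f a) b :=
    ((compatRel_compl_right_iff hi).2 (h.symm hs hi ha)).symm hs hi ha
  rw [commOp_eq_inter, ← h, ← h', ← hsup a, upperBounds_insert, upperBounds_singleton]

end

theorem strong_skew_compat_tfae_general {P : Type*} [PartialOrder P] [BoundedOrder P]
    (f : P → P)
    (hinv : ∀ x, f (f x) = x)
    (hanti : ∀ x y : P, x ≤ y → f y ≤ f x)
    (hsup : ∀ x : P, upperBounds {x, f x} = {(⊤ : P)})
    (hsskew : ∀ (A : Set P) (y : P), y ∈ upperBounds A →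
      upperBounds {y} = upperBounds (A ∪ lowerBounds (insert y (f '' A))))
    (a b : P) :
    (compatRel f a b ↔ compatRel f b a) ∧
    (compatRel f a b ↔ commOp f a b = {(⊤ : P)}) := by
  have hanti' : Antitone f := fun x y => hanti x y
  have hs : IsStrongSkew f := hsskew
  have hsymm {x y : P} : compatRel f x y → compatRel f y x := fun h => h.symm hs hinv hanti'
  exact ⟨⟨hsymm, hsymm⟩, fun h => h.commOp_eq_top hs hinv hanti' hsup,
    hs.compatRel_of_commOp_eq_top hinv hanti'⟩

/-- In a strong skew orthomodular poset:
a C b ↔ b C a ↔ c(a,b) = {1}. -/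
theorem strong_skew_compat_tfae {P : Type*} [PartialOrder P] [BoundedOrder P]
    (f : P → P)
    (hinv : ∀ x, f (f x) = x)
    (hanti : ∀ x y : P, x ≤ y → f y ≤ f x)
    (hinf : ∀ x : P, lowerBounds {x, f x} = {(⊥ : P)})
    (hsup : ∀ x : P, upperBounds {x, f x} = {(⊤ : P)})
    (hsskew : ∀ (A : Set P) (y : P), y ∈ upperBounds A →
      upperBounds {y} = upperBounds (A ∪ lowerBounds (insert y (f '' A))))
    (a b : P) :
    (compatRel f a b ↔ compatRel f b a) ∧
    (compatRel f a b ↔ commOp f a b = {(⊤ : P)}) :=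
  strong_skew_compat_tfae_general f hinv hanti hsup hsskew a b
end

section
/- In an orthoposet satisfying the ACC and the two conditions (1) L(U(L(x,y) ∪ {y'}) ∪ {y}) ⊆ L(x) and (2) U(L(U(x,y) ∪ {y'}) ∪ {y}) ⊆ U(x) for all x, y, the operators a ⊙ b := Max L({b} ∪ U(a,b')) and b → c := Min U({b'} ∪ L(b,c)) form an adjoint pair: a ⊙ b ≤ c (every element of a ⊙ b is ≤ c) if and only if a ≤ b → c (a is ≤ every element of b → c). -/
/-- The set of maximal elements of A. -/
def maxElems {P : Type*} [PartialOrder P] (A : Set P) : Set P :=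
  {a | a ∈ A ∧ ∀ b ∈ A, ¬ a < b}

/-- The set of minimal elements of A. -/
def minElems {P : Type*} [PartialOrder P] (A : Set P) : Set P :=
  {a | a ∈ A ∧ ∀ b ∈ A, ¬ b < a}

/-!
Under the ACC every element of a set lies below a maximal one, so `a ⊙ b ≤ c` says that the
whole lower cone `L(b, U(a, b'))` lies below `c`; dually (the DCC follows from the ACC through
the involution) `a ≤ b → c` says that `a` lies below the whole upper cone `U(b', L(b, c))`.
Between these cone inequalities condition (2), applied to `a` and `b'`, gives one direction and
condition (1), applied to `c` and `b`, the other.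
-/

open Set

theorem wellFoundedGT_of_forall_not_strictMono {α : Type*} [Preorder α]
    (h : ∀ g : ℕ → α, ¬ StrictMono g) : WellFoundedGT α := by
  rw [WellFoundedGT, isWellFounded_iff, RelEmbedding.wellFounded_iff_isEmpty]
  exact ⟨fun g ↦ h g.toFun fun _ _ hmn ↦ g.map_rel_iff.2 hmn⟩

section Extremal

variable {α : Type*} [PartialOrder α] {S : Set α} {c : α}

theorem forall_mem_maxElems_le_iff [WellFoundedGT α] :
    (∀ x ∈ maxElems S, x ≤ c) ↔ c ∈ upperBounds S := by
  refine ⟨fun h x hx ↦ ?_, fun h x hx ↦ h hx.1⟩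
  obtain ⟨m, hxm, hm⟩ := exists_maximal_ge_of_wellFoundedGT (· ∈ S) x hx
  exact hxm.trans (h m ⟨hm.prop, fun y hy hmy ↦ hm.not_gt hy hmy⟩)

theorem forall_mem_minElems_ge_iff [WellFoundedLT α] :
    (∀ x ∈ minElems S, c ≤ x) ↔ c ∈ lowerBounds S := by
  refine ⟨fun h x hx ↦ ?_, fun h x hx ↦ h hx.1⟩
  obtain ⟨m, hmx, hm⟩ := exists_minimal_le_of_wellFoundedLT (· ∈ S) x hx
  exact (h m ⟨hm.prop, fun y hy hym ↦ hm.not_lt hy hym⟩).trans hmx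

end Extremal

section Orthoposet

variable {P : Type*} [PartialOrder P] {f : P → P}

theorem wellFoundedLT_of_antitone_involutive [WellFoundedGT P] (hinv : Function.Involutive f)
    (hanti : Antitone f) : WellFoundedLT P :=
  (hanti.strictAnti_of_injective hinv.injective).wellFoundedLT

theorem mem_upperBounds_lowerBounds_insert_iff (hinv : ∀ x, f (f x) = x)
    (h1 : ∀ x y : P,
      lowerBounds (upperBounds (lowerBounds {x, y} ∪ {f y}) ∪ {y}) ⊆ lowerBounds {x})
    (h2 : ∀ x y : P,
      upperBounds (lowerBounds (upperBounds {x, y} ∪ {f y}) ∪ {y}) ⊆ upperBounds {x})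
    (a b c : P) :
    c ∈ upperBounds (lowerBounds (insert b (upperBounds {a, f b}))) ↔
      a ∈ lowerBounds (upperBounds (insert (f b) (lowerBounds {b, c}))) := by
  constructor
  · intro hc u hu
    have hcone : lowerBounds (insert b (upperBounds {a, f b})) ⊆ lowerBounds {b, c} :=
      fun x hx ↦ by
        rw [lowerBounds_insert, lowerBounds_singleton]
        exact ⟨hx (mem_insert _ _), hc hx⟩
    have h2' := h2 a (f b)
    rw [hinv, union_singleton, union_singleton, upperBounds_singleton] at h2'
    exact h2' (upperBounds_mono_set (insert_subset_insert hcone) hu)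
  · intro ha x hx
    have hcone : upperBounds (insert (f b) (lowerBounds {b, c})) ⊆ upperBounds {a, f b} :=
      fun u hu ↦ by
        rw [upperBounds_insert, upperBounds_singleton]
        exact ⟨ha hu, hu (mem_insert _ _)⟩
    have h1' := h1 c b
    rw [pair_comm, union_singleton, union_singleton, lowerBounds_singleton] at h1'
    exact h1' (lowerBounds_mono_set (insert_subset_insert hcone) hx)

end Orthoposet

theorem sharp_conjunction_implication_adjoint_general {P : Type*} [PartialOrder P]
    (f : P → P)
    (hinv : ∀ x, f (f x) = x)
    (hanti : ∀ x y : P, x ≤ y → f y ≤ f x)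
    (hacc : ∀ g : ℕ → P, ¬ StrictMono g)
    (h1 : ∀ x y : P,
      lowerBounds (upperBounds (lowerBounds {x, y} ∪ {f y}) ∪ {y}) ⊆ lowerBounds {x})
    (h2 : ∀ x y : P,
      upperBounds (lowerBounds (upperBounds {x, y} ∪ {f y}) ∪ {y}) ⊆ upperBounds {x})
    (a b c : P) :
    (∀ x ∈ maxElems (lowerBounds (insert b (upperBounds {a, f b}))), x ≤ c) ↔
    (∀ y ∈ minElems (upperBounds (insert (f b) (lowerBounds {b, c}))), a ≤ y) := by
  have := wellFoundedGT_of_forall_not_strictMono hacc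
  have := wellFoundedLT_of_antitone_involutive hinv fun x y ↦ hanti x y
  rw [forall_mem_maxElems_le_iff, forall_mem_minElems_ge_iff]
  exact mem_upperBounds_lowerBounds_insert_iff hinv h1 h2 a b c

/-- In an orthoposet satisfying the ACC and conditions (1) and (2),
the sharp conjunction and sharp implication form an adjoint pair. -/
theorem sharp_conjunction_implication_adjoint {P : Type*} [PartialOrder P] [BoundedOrder P]
    (f : P → P)
    (hinv : ∀ x, f (f x) = x)
    (hanti : ∀ x y : P, x ≤ y → f y ≤ f x)
    (hinf : ∀ x : P, lowerBounds {x, f x} = {(⊥ : P)})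
    (hsup : ∀ x : P, upperBounds {x, f x} = {(⊤ : P)})
    (hacc : ∀ g : ℕ → P, ¬ StrictMono g)
    (h1 : ∀ x y : P,
      lowerBounds (upperBounds (lowerBounds {x, y} ∪ {f y}) ∪ {y}) ⊆ lowerBounds {x})
    (h2 : ∀ x y : P,
      upperBounds (lowerBounds (upperBounds {x, y} ∪ {f y}) ∪ {y}) ⊆ upperBounds {x})
    (a b c : P) :
    (∀ x ∈ maxElems (lowerBounds (insert b (upperBounds {a, f b}))), x ≤ c) ↔
    (∀ y ∈ minElems (upperBounds (insert (f b) (lowerBounds {b, c}))), a ≤ y) :=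
  sharp_conjunction_implication_adjoint_general f hinv hanti hacc h1 h2 a b c
end
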